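/- For all nonzero vectors ξ, η ∈ ℝ² and choices of signs ±₁, ±₂ ∈ {+1,-1}, the inequality |±₂⟨ξ⟩⟨η⟩ - (±₁ξ)·η| ≤ C(⟨η⟩ + ⟨η⟩⟨ξ⟩Θ(±₁ξ, ±₂η) + ⟨ξ⟩) holds for an absolute constant C, where Θ denotes the angle between two vectors and ⟨ξ⟩ = (1+|ξ|²)^{1/2}. -/

import Mathlib

/-! With `a = ±₁ξ`, `b = ±₂η` and `θ = Θ(a, b)` we have `(±₁ξ)·η = ±₂ |ξ||η| cos θ`, so the
quantity to bound is `⟨ξ⟩⟨η⟩ - |ξ||η| cos θ = (⟨ξ⟩⟨η⟩ - |ξ||η|) + |ξ||η| (1 - cos θ)`.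
The first term is at most `⟨ξ⟩ + ⟨η⟩` because `⟨x⟩ - |x| ≤ 1`, and the second at most
`2 ⟨ξ⟩⟨η⟩ θ` because `1 - cos θ ≤ min (2, θ² / 2) ≤ 2θ`; hence `C = 2` works. -/

open InnerProductGeometry Real

lemma one_sub_cos_le_two_mul {θ : ℝ} (hθ : 0 ≤ θ) : 1 - cos θ ≤ 2 * θ := by
  rcases le_total θ 1 with hθ1 | hθ1
  · nlinarith [one_sub_sq_div_two_le_cos (x := θ)]
  · linarith [neg_one_le_cos θ]

section JapaneseBracket

variable {E F : Type*} [NormedAddCommGroup E] [NormedAddCommGroup F]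

lemma norm_le_sqrt_one_add_norm_sq (x : E) : ‖x‖ ≤ √(1 + ‖x‖ ^ 2) :=
  le_sqrt_of_sq_le (by linarith)

lemma sqrt_one_add_norm_sq_mul_sub_norm_mul_norm_le (x : E) (y : F) :
    √(1 + ‖x‖ ^ 2) * √(1 + ‖y‖ ^ 2) - ‖x‖ * ‖y‖ ≤ √(1 + ‖x‖ ^ 2) + √(1 + ‖y‖ ^ 2) := by
  have hx := norm_le_sqrt_one_add_norm_sq x
  have hy := norm_le_sqrt_one_add_norm_sq y
  have hy' := sqrt_one_add_norm_sq_le y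
  have hx' := sqrt_one_add_norm_sq_le x
  calc √(1 + ‖x‖ ^ 2) * √(1 + ‖y‖ ^ 2) - ‖x‖ * ‖y‖
      = √(1 + ‖x‖ ^ 2) * (√(1 + ‖y‖ ^ 2) - ‖y‖) + ‖y‖ * (√(1 + ‖x‖ ^ 2) - ‖x‖) := by ring
    _ ≤ √(1 + ‖x‖ ^ 2) * 1 + √(1 + ‖y‖ ^ 2) * 1 := by
      gcongr <;> linarith
    _ = √(1 + ‖x‖ ^ 2) + √(1 + ‖y‖ ^ 2) := by ring

lemma abs_sqrt_one_add_norm_sq_mul_sub_norm_mul_norm_mul_cos_le (x : E) (y : F) {θ : ℝ}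
    (hθ : 0 ≤ θ) :
    |√(1 + ‖x‖ ^ 2) * √(1 + ‖y‖ ^ 2) - ‖x‖ * ‖y‖ * cos θ| ≤
      2 * (√(1 + ‖y‖ ^ 2) + √(1 + ‖y‖ ^ 2) * √(1 + ‖x‖ ^ 2) * θ + √(1 + ‖x‖ ^ 2)) := by
  set S := √(1 + ‖x‖ ^ 2)
  set T := √(1 + ‖y‖ ^ 2)
  have hnorms : ‖x‖ * ‖y‖ ≤ S * T := mul_le_mul (norm_le_sqrt_one_add_norm_sq x)
    (norm_le_sqrt_one_add_norm_sq y) (norm_nonneg y) (sqrt_nonneg _)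
  have hcos : 0 ≤ 1 - cos θ := sub_nonneg.2 (cos_le_one θ)
  have hangle : ‖x‖ * ‖y‖ * (1 - cos θ) ≤ S * T * (2 * θ) :=
    mul_le_mul hnorms (one_sub_cos_le_two_mul hθ) hcos (by positivity)
  have hsplit : S * T - ‖x‖ * ‖y‖ * cos θ = (S * T - ‖x‖ * ‖y‖) + ‖x‖ * ‖y‖ * (1 - cos θ) := by
    ring
  rw [abs_of_nonneg (by rw [hsplit]; positivity), hsplit]
  calc (S * T - ‖x‖ * ‖y‖) + ‖x‖ * ‖y‖ * (1 - cos θ)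
      ≤ (S + T) + S * T * (2 * θ) :=
        add_le_add (sqrt_one_add_norm_sq_mul_sub_norm_mul_norm_le x y) hangle
    _ ≤ 2 * (T + T * S * θ + S) := by
      linarith [sqrt_nonneg (1 + ‖x‖ ^ 2), sqrt_nonneg (1 + ‖y‖ ^ 2)]

end JapaneseBracket

lemma norm_smul_of_abs_eq_one {V : Type*} [SeminormedAddCommGroup V] [NormedSpace ℝ V] (v : V)
    {ε : ℝ} (hε : |ε| = 1) : ‖ε • v‖ = ‖v‖ := by
  rw [norm_smul, norm_eq_abs, hε, one_mul]

lemma inner_eq_mul_norm_mul_norm_mul_cos_angle_smul {V : Type*} [NormedAddCommGroup V]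
    [InnerProductSpace ℝ V] (a b : V) {ε : ℝ} (hε : |ε| = 1) :
    inner ℝ a b = ε * (‖a‖ * ‖b‖ * cos (angle a (ε • b))) := by
  have hεε : ε * ε = 1 := by rw [← abs_mul_abs_self, hε, one_mul]
  calc inner ℝ a b = ε * inner ℝ a (ε • b) := by
        rw [real_inner_smul_right, ← mul_assoc, hεε, one_mul]
    _ = ε * (‖a‖ * ‖b‖ * cos (angle a (ε • b))) := by
      rw [← cos_angle_mul_norm_mul_norm, norm_smul_of_abs_eq_one b hε, mul_comm (cos _)]

theorem stmt_2 :
    ∃ C : ℝ, 0 < C ∧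
      ∀ (ε₁ ε₂ : ℝ), (ε₁ = 1 ∨ ε₁ = -1) → (ε₂ = 1 ∨ ε₂ = -1) →
      ∀ ξ η : EuclideanSpace ℝ (Fin 2), ξ ≠ 0 → η ≠ 0 →
        |ε₂ * (Real.sqrt (1 + ‖ξ‖ ^ 2) * Real.sqrt (1 + ‖η‖ ^ 2)) - inner ℝ (ε₁ • ξ) η| ≤
          C * (Real.sqrt (1 + ‖η‖ ^ 2)
            + Real.sqrt (1 + ‖η‖ ^ 2) * Real.sqrt (1 + ‖ξ‖ ^ 2) * angle (ε₁ • ξ) (ε₂ • η)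
            + Real.sqrt (1 + ‖ξ‖ ^ 2)) := by
  refine ⟨2, two_pos, fun ε₁ ε₂ hε₁ hε₂ ξ η _ _ => ?_⟩
  have h₁ : |ε₁| = 1 := (abs_eq zero_le_one).2 hε₁
  have h₂ : |ε₂| = 1 := (abs_eq zero_le_one).2 hε₂
  rw [inner_eq_mul_norm_mul_norm_mul_cos_angle_smul _ _ h₂, norm_smul_of_abs_eq_one ξ h₁,
    ← mul_sub, abs_mul, h₂, one_mul]
  exact abs_sqrt_one_add_norm_sq_mul_sub_norm_mul_norm_mul_cos_le ξ η (angle_nonneg _ _)
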